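/- Assume the δ-twisted antipode is an involution, S̃² = id. Then the square of the cyclic operator τ₂ on H ⊗ H is given by τ₂²(h¹ ⊗ h²) = Δ(S̃(h²)) · (1 ⊗ h¹) = ∑ S(h²₍₂₎) ⊗ S̃(h²₍₁₎) h¹ for all h¹, h² ∈ H. -/

import Mathlib

/-!
Let `H` be a Hopf algebra over `ℂ` with coproduct `Δ = Coalgebra.comul`, counit
`ε = Coalgebra.counit`, antipode `S = HopfAlgebra.antipode` and unit `1`.  We fix a
character `δ : H →ₐ[ℂ] ℂ`.  The `δ`-twisted antipode is the linear map
`S̃(h) = ∑ δ(h₍₁₎) S(h₍₂₎)`.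
-/

open TensorProduct

noncomputable section

variable (H : Type) [Ring H] [HopfAlgebra ℂ H]

/-- The `δ`-twisted antipode `S̃(h) = ∑ δ(h₍₁₎) S(h₍₂₎)`. -/
def twistedAntipode (δ : H →ₐ[ℂ] ℂ) : H →ₗ[ℂ] H :=
  (TensorProduct.lid ℂ H).toLinearMap ∘ₗ
    (TensorProduct.map δ.toLinearMap (HopfAlgebra.antipode (R := ℂ))) ∘ₗ
      Coalgebra.comul

/-- The cyclic operator `τ₂ : H ⊗ H →ₗ H ⊗ H`, `τ₂(h¹ ⊗ h²) = Δ(S̃(h¹)) · (h² ⊗ 1)`,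
where `·` is the componentwise product of `H ⊗ H`. -/
def tau2 (δ : H →ₐ[ℂ] ℂ) : H ⊗[ℂ] H →ₗ[ℂ] H ⊗[ℂ] H :=
  LinearMap.mul' ℂ (H ⊗[ℂ] H) ∘ₗ
    TensorProduct.map (Coalgebra.comul ∘ₗ twistedAntipode H δ)
      ((TensorProduct.mk ℂ H H).flip 1)

section Aux
open Coalgebra LinearMap HopfAlgebra
set_option linter.unusedSectionVars false

section ConvToolkit
variable {C A : Type} [AddCommGroup C] [Module ℂ C] [Coalgebra ℂ C]
  [Ring A] [Algebra ℂ A]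
  [Ring A] [Algebra ℂ A]

def conv (f g : C →ₗ[ℂ] A) : C →ₗ[ℂ] A :=
  LinearMap.mul' ℂ A ∘ₗ TensorProduct.map f g ∘ₗ Coalgebra.comul

def convOne : C →ₗ[ℂ] A := Algebra.linearMap ℂ A ∘ₗ Coalgebra.counit

lemma conv_apply_repr (f g : C →ₗ[ℂ] A) {a : C} (r : Coalgebra.Repr ℂ a (C × C)) :
    conv f g a = ∑ i ∈ r.index, f (r.left i) * g (r.right i) := by
  simp only [conv, LinearMap.comp_apply, ← r.eq, map_sum, TensorProduct.map_tmul,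
    LinearMap.mul'_apply]

lemma sum_smul_counit_eq {a : C} (r : Coalgebra.Repr ℂ a (C × C)) :
    ∑ i ∈ r.index, Coalgebra.counit (R := ℂ) (r.right i) • r.left i = a := by
  have h1 := congrArg (TensorProduct.rid ℂ C).toLinearMap (Coalgebra.sum_tmul_counit_eq (R := ℂ) r)
  simpa only [map_sum, LinearEquiv.coe_coe, TensorProduct.rid_tmul, one_smul] using h1

lemma sum_counit_smul_eq {a : C} (r : Coalgebra.Repr ℂ a (C × C)) :
    ∑ i ∈ r.index, Coalgebra.counit (R := ℂ) (r.left i) • r.right i = a := by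
  have h1 := congrArg (TensorProduct.lid ℂ C).toLinearMap (Coalgebra.sum_counit_tmul_eq (R := ℂ) r)
  simpa only [map_sum, LinearEquiv.coe_coe, TensorProduct.lid_tmul, one_smul] using h1

lemma conv_convOne (f : C →ₗ[ℂ] A) : conv f convOne = f := by
  ext a
  rw [conv_apply_repr f convOne (Coalgebra.Repr.arbitrary ℂ a)]
  simp only [_root_.convOne, LinearMap.comp_apply, Algebra.linearMap_apply, Algebra.algebraMap_eq_smul_one]
  calc ∑ i ∈ (ℛ ℂ a).index, f ((ℛ ℂ a).left i) * (Coalgebra.counit (R := ℂ) ((ℛ ℂ a).right i) • 1)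
      = f (∑ i ∈ (ℛ ℂ a).index, Coalgebra.counit (R := ℂ) ((ℛ ℂ a).right i) • (ℛ ℂ a).left i) := by
        simp [map_sum, mul_smul_comm]
    _ = f a := by rw [sum_smul_counit_eq]

lemma convOne_conv (f : C →ₗ[ℂ] A) : conv convOne f = f := by
  ext a
  rw [conv_apply_repr convOne f (Coalgebra.Repr.arbitrary ℂ a)]
  simp only [_root_.convOne, LinearMap.comp_apply, Algebra.linearMap_apply, Algebra.algebraMap_eq_smul_one]
  calc ∑ i ∈ (ℛ ℂ a).index, (Coalgebra.counit (R := ℂ) ((ℛ ℂ a).left i) • 1) * f ((ℛ ℂ a).right i)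
      = f (∑ i ∈ (ℛ ℂ a).index, Coalgebra.counit (R := ℂ) ((ℛ ℂ a).left i) • (ℛ ℂ a).right i) := by
        simp [map_sum, smul_mul_assoc]
    _ = f a := by rw [sum_counit_smul_eq]

lemma conv_assoc (f g h : C →ₗ[ℂ] A) : conv (conv f g) h = conv f (conv g h) := by
  have key : LinearMap.mul' ℂ A ∘ₗ (LinearMap.mul' ℂ A).rTensor A ∘ₗ
        TensorProduct.map (TensorProduct.map f g) h
      = (LinearMap.mul' ℂ A ∘ₗ (LinearMap.mul' ℂ A).lTensor A ∘ₗ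
          TensorProduct.map f (TensorProduct.map g h)) ∘ₗ
        (TensorProduct.assoc ℂ C C C).toLinearMap := by
    apply TensorProduct.ext
    apply TensorProduct.ext
    ext x y z
    simp [mul_assoc]
  have l1 : conv (conv f g) h
      = (LinearMap.mul' ℂ A ∘ₗ (LinearMap.mul' ℂ A).rTensor A ∘ₗ
          TensorProduct.map (TensorProduct.map f g) h) ∘ₗ
        ((Coalgebra.comul (R := ℂ) (A := C)).rTensor C ∘ₗ Coalgebra.comul) := by
    unfold conv
    rw [← LinearMap.rTensor_comp_map, ← LinearMap.map_comp_rTensor]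
    simp only [LinearMap.comp_assoc]
  have l2 : conv f (conv g h)
      = (LinearMap.mul' ℂ A ∘ₗ (LinearMap.mul' ℂ A).lTensor A ∘ₗ
          TensorProduct.map f (TensorProduct.map g h)) ∘ₗ
        ((Coalgebra.comul (R := ℂ) (A := C)).lTensor C ∘ₗ Coalgebra.comul) := by
    unfold conv
    rw [← LinearMap.lTensor_comp_map, ← LinearMap.map_comp_lTensor]
    simp only [LinearMap.comp_assoc]
  rw [l1, l2, ← Coalgebra.coassoc, key]
  simp only [LinearMap.comp_assoc]

lemma conv_unique (f m g : C →ₗ[ℂ] A) (h1 : conv f m = _root_.convOne) (h2 : conv m g = _root_.convOne) :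
    f = g := by
  have : conv f (conv m g) = conv (conv f m) g := (conv_assoc f m g).symm
  rw [h1, h2, conv_convOne, convOne_conv] at this
  exact this

lemma conv_comp_coalgMor {C' : Type} [AddCommGroup C'] [Module ℂ C'] [Coalgebra ℂ C']
    (φ : C' →ₗ[ℂ] C) (hφ : Coalgebra.comul ∘ₗ φ = TensorProduct.map φ φ ∘ₗ Coalgebra.comul)
    (f g : C →ₗ[ℂ] A) : conv (f ∘ₗ φ) (g ∘ₗ φ) = conv f g ∘ₗ φ := by
  unfold conv
  rw [TensorProduct.map_comp]
  calc LinearMap.mul' ℂ A ∘ₗ (TensorProduct.map f g ∘ₗ TensorProduct.map φ φ) ∘ₗ Coalgebra.comul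
      = LinearMap.mul' ℂ A ∘ₗ TensorProduct.map f g ∘ₗ
        (TensorProduct.map φ φ ∘ₗ Coalgebra.comul) := by simp only [LinearMap.comp_assoc]
    _ = _ := by rw [← hφ]; simp only [LinearMap.comp_assoc]

lemma conv_algMor_comp {A' : Type} [Ring A'] [Algebra ℂ A'] (ψ : A →ₗ[ℂ] A')
    (hψ : LinearMap.mul' ℂ A' ∘ₗ TensorProduct.map ψ ψ = ψ ∘ₗ LinearMap.mul' ℂ A)
    (f g : C →ₗ[ℂ] A) : conv (ψ ∘ₗ f) (ψ ∘ₗ g) = ψ ∘ₗ conv f g := by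
  unfold conv
  rw [TensorProduct.map_comp]
  calc LinearMap.mul' ℂ A' ∘ₗ (TensorProduct.map ψ ψ ∘ₗ TensorProduct.map f g) ∘ₗ Coalgebra.comul
      = (LinearMap.mul' ℂ A' ∘ₗ TensorProduct.map ψ ψ) ∘ₗ TensorProduct.map f g ∘ₗ
        Coalgebra.comul := by simp only [LinearMap.comp_assoc]
    _ = _ := by rw [hψ]; simp only [LinearMap.comp_assoc]

end ConvToolkit

section Antipode
variable {H}

lemma conv_antipode_id : conv (HopfAlgebra.antipode (R := ℂ) (A := H)) LinearMap.id = _root_.convOne := by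
  unfold conv _root_.convOne
  rw [show TensorProduct.map (HopfAlgebra.antipode (R := ℂ) (A := H)) LinearMap.id
      = (HopfAlgebra.antipode (R := ℂ) (A := H)).rTensor H from rfl]
  exact HopfAlgebra.mul_antipode_rTensor_comul

lemma conv_id_antipode : conv LinearMap.id (HopfAlgebra.antipode (R := ℂ) (A := H)) = _root_.convOne := by
  unfold conv _root_.convOne
  rw [show TensorProduct.map LinearMap.id (HopfAlgebra.antipode (R := ℂ) (A := H))
      = (HopfAlgebra.antipode (R := ℂ) (A := H)).lTensor H from rfl]
  exact HopfAlgebra.mul_antipode_lTensor_comul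

lemma comul_comp_mul' :
    (Coalgebra.comul (R := ℂ) (A := H)) ∘ₗ LinearMap.mul' ℂ H
      = TensorProduct.map (LinearMap.mul' ℂ H) (LinearMap.mul' ℂ H) ∘ₗ
        (Coalgebra.comul (R := ℂ) (A := H ⊗[ℂ] H)) := by
  have key : TensorProduct.map (LinearMap.mul' ℂ H) (LinearMap.mul' ℂ H) ∘ₗ
      (TensorProduct.tensorTensorTensorComm ℂ H H H H).toLinearMap
      = LinearMap.mul' ℂ (H ⊗[ℂ] H) := by
    apply TensorProduct.ext
    apply TensorProduct.ext
    ext a b c d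
    simp [Algebra.TensorProduct.tmul_mul_tmul]
  apply TensorProduct.ext'
  intro x y
  have hc : (Coalgebra.comul (R := ℂ) (x ⊗ₜ[ℂ] y) : (H ⊗[ℂ] H) ⊗[ℂ] (H ⊗[ℂ] H))
      = (TensorProduct.tensorTensorTensorComm ℂ H H H H)
          (TensorProduct.map Coalgebra.comul Coalgebra.comul (x ⊗ₜ y)) := by
    simp [TensorProduct.AlgebraTensorModule.tensorTensorTensorComm_eq]
  simp only [LinearMap.comp_apply, LinearMap.mul'_apply, hc]
  rw [show ((TensorProduct.tensorTensorTensorComm ℂ H H H H)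
      (TensorProduct.map Coalgebra.comul Coalgebra.comul (x ⊗ₜ y)))
    = (TensorProduct.tensorTensorTensorComm ℂ H H H H).toLinearMap
      (TensorProduct.map Coalgebra.comul Coalgebra.comul (x ⊗ₜ y)) from rfl]
  rw [← LinearMap.comp_apply, key]
  simp [Bialgebra.comul_mul]

lemma counit_comp_mul' :
    (Coalgebra.counit (R := ℂ) (A := H)) ∘ₗ LinearMap.mul' ℂ H
      = Coalgebra.counit (R := ℂ) (A := H ⊗[ℂ] H) := by
  apply TensorProduct.ext'
  intro x y
  simp [mul_comm]

lemma comul_tmul_repr {x y : H} (rx : Coalgebra.Repr ℂ x (H × H)) (ry : Coalgebra.Repr ℂ y (H × H)) :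
    (Coalgebra.comul (R := ℂ) (x ⊗ₜ[ℂ] y) : (H ⊗[ℂ] H) ⊗[ℂ] (H ⊗[ℂ] H))
      = ∑ i ∈ rx.index, ∑ j ∈ ry.index,
          (rx.left i ⊗ₜ[ℂ] ry.left j) ⊗ₜ[ℂ] (rx.right i ⊗ₜ[ℂ] ry.right j) := by
  have : (Coalgebra.comul (R := ℂ) (x ⊗ₜ[ℂ] y) : (H ⊗[ℂ] H) ⊗[ℂ] (H ⊗[ℂ] H))
      = (TensorProduct.tensorTensorTensorComm ℂ H H H H)
          (TensorProduct.map Coalgebra.comul Coalgebra.comul (x ⊗ₜ y)) := by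
    simp [TensorProduct.AlgebraTensorModule.tensorTensorTensorComm_eq]
  rw [this, TensorProduct.map_tmul, ← rx.eq, ← ry.eq, TensorProduct.sum_tmul]
  simp only [TensorProduct.tmul_sum, map_sum, TensorProduct.tensorTensorTensorComm_tmul]

/-- antipode is anti-multiplicative -/
lemma antipode_mul' :
    (HopfAlgebra.antipode (R := ℂ) (A := H)) ∘ₗ LinearMap.mul' ℂ H
      = LinearMap.mul' ℂ H ∘ₗ
        TensorProduct.map (HopfAlgebra.antipode (R := ℂ)) (HopfAlgebra.antipode (R := ℂ)) ∘ₗ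
        (TensorProduct.comm ℂ H H).toLinearMap := by
  apply conv_unique _ (LinearMap.mul' ℂ H) _ _ _
  · -- conv (S ∘ μ) μ = convOne
    have : (LinearMap.mul' ℂ H : H ⊗[ℂ] H →ₗ[ℂ] H) = LinearMap.id ∘ₗ LinearMap.mul' ℂ H := by
      simp
    rw [show conv ((HopfAlgebra.antipode (R := ℂ) (A := H)) ∘ₗ LinearMap.mul' ℂ H)
          (LinearMap.mul' ℂ H)
        = conv ((HopfAlgebra.antipode (R := ℂ) (A := H)) ∘ₗ LinearMap.mul' ℂ H)
          (LinearMap.id ∘ₗ LinearMap.mul' ℂ H) by rw [← this]]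
    rw [conv_comp_coalgMor (LinearMap.mul' ℂ H) comul_comp_mul', conv_antipode_id]
    unfold _root_.convOne
    rw [LinearMap.comp_assoc, counit_comp_mul']
  · -- conv μ (μ ∘ (S ⊗ S) ∘ comm) = convOne
    apply LinearMap.ext
    intro z
    induction z using TensorProduct.induction_on with
    | zero => simp
    | add u v hu hv => rw [map_add, map_add, hu, hv]
    | tmul x y =>
      set rx := ℛ ℂ x
      set ry := ℛ ℂ y
      have expand : conv (LinearMap.mul' ℂ H)
          (LinearMap.mul' ℂ H ∘ₗ
            TensorProduct.map (HopfAlgebra.antipode (R := ℂ)) (HopfAlgebra.antipode (R := ℂ)) ∘ₗ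
            (TensorProduct.comm ℂ H H).toLinearMap) (x ⊗ₜ[ℂ] y)
          = ∑ i ∈ rx.index, ∑ j ∈ ry.index,
              (rx.left i * ry.left j) *
                (HopfAlgebra.antipode (R := ℂ) (ry.right j) *
                  HopfAlgebra.antipode (R := ℂ) (rx.right i)) := by
        simp only [conv, LinearMap.comp_apply, comul_tmul_repr rx ry, map_sum,
          TensorProduct.map_tmul, LinearMap.mul'_apply, LinearEquiv.coe_coe,
          TensorProduct.comm_tmul]
      rw [expand]
      have step : ∀ i ∈ rx.index, ∑ j ∈ ry.index,
          (rx.left i * ry.left j) *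
            (HopfAlgebra.antipode (R := ℂ) (ry.right j) *
              HopfAlgebra.antipode (R := ℂ) (rx.right i))
          = Coalgebra.counit (R := ℂ) y •
              (rx.left i * HopfAlgebra.antipode (R := ℂ) (rx.right i)) := by
        intro i _
        have : ∑ j ∈ ry.index,
            (rx.left i * ry.left j) *
              (HopfAlgebra.antipode (R := ℂ) (ry.right j) *
                HopfAlgebra.antipode (R := ℂ) (rx.right i))
            = rx.left i * ((∑ j ∈ ry.index,
                ry.left j * HopfAlgebra.antipode (R := ℂ) (ry.right j)) *
                HopfAlgebra.antipode (R := ℂ) (rx.right i)) := by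
          rw [Finset.sum_mul, Finset.mul_sum]
          exact Finset.sum_congr rfl fun j _ => by simp only [mul_assoc]
        rw [this, HopfAlgebra.sum_mul_antipode_eq_algebraMap_counit ry, Algebra.algebraMap_eq_smul_one,
          smul_mul_assoc, one_mul, mul_smul_comm]
      rw [Finset.sum_congr rfl step, ← Finset.smul_sum, HopfAlgebra.sum_mul_antipode_eq_algebraMap_counit rx]
      simp only [_root_.convOne, LinearMap.comp_apply, Algebra.linearMap_apply,
        TensorProduct.counit_tmul, LinearMap.mul'_apply, TensorProduct.map_tmul]
      rw [Algebra.algebraMap_eq_smul_one, Algebra.algebraMap_eq_smul_one, smul_smul, smul_eq_mul, mul_comm]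

lemma antipode_mul (x y : H) :
    HopfAlgebra.antipode (R := ℂ) (x * y)
      = HopfAlgebra.antipode (R := ℂ) y * HopfAlgebra.antipode (R := ℂ) x := by
  have := LinearMap.congr_fun (antipode_mul' (H := H)) (x ⊗ₜ[ℂ] y)
  simpa using this

end Antipode

section ComulAntipode
variable {H}

/-- `∑ Δ(a₍₁₎) · (1 ⊗ S(a₍₂₎)) = a ⊗ 1`. -/
lemma sum_comul_mul_one_antipode {x : H} (c : Coalgebra.Repr ℂ x (H × H)) :
    ∑ i ∈ c.index, Coalgebra.comul (R := ℂ) (c.left i) *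
        ((1 : H) ⊗ₜ[ℂ] HopfAlgebra.antipode (R := ℂ) (c.right i))
      = x ⊗ₜ[ℂ] (1 : H) := by
  set e : (i : c.ι) → Coalgebra.Repr ℂ (c.left i) (H × H) := fun i => ℛ ℂ (c.left i)
  set f : (i : c.ι) → Coalgebra.Repr ℂ (c.right i) (H × H) := fun i => ℛ ℂ (c.right i)
  have key := Coalgebra.sum_tmul_tmul_eq (R := ℂ) c e f
  have Θkey := congrArg
    ((LinearMap.mul' ℂ H ∘ₗ (HopfAlgebra.antipode (R := ℂ) (A := H)).lTensor H).lTensor H) key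
  simp only [map_sum, LinearMap.lTensor_tmul, LinearMap.comp_apply, LinearMap.mul'_apply] at Θkey
  have lhs_eq : ∑ i ∈ c.index, Coalgebra.comul (R := ℂ) (c.left i) *
        ((1 : H) ⊗ₜ[ℂ] HopfAlgebra.antipode (R := ℂ) (c.right i))
      = ∑ i ∈ c.index, ∑ j ∈ (e i).index,
          (e i).left j ⊗ₜ[ℂ] ((e i).right j * HopfAlgebra.antipode (R := ℂ) (c.right i)) := by
    refine Finset.sum_congr rfl fun i _ => ?_
    rw [← (e i).eq, Finset.sum_mul]
    exact Finset.sum_congr rfl fun j _ => by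
      rw [Algebra.TensorProduct.tmul_mul_tmul, mul_one]
  rw [lhs_eq, Θkey]
  have rhs_eq : ∑ i ∈ c.index, ∑ j ∈ (f i).index,
        c.left i ⊗ₜ[ℂ] ((f i).left j * HopfAlgebra.antipode (R := ℂ) ((f i).right j))
      = ∑ i ∈ c.index, Coalgebra.counit (R := ℂ) (c.right i) • (c.left i ⊗ₜ[ℂ] (1 : H)) := by
    refine Finset.sum_congr rfl fun i _ => ?_
    rw [← TensorProduct.tmul_sum, HopfAlgebra.sum_mul_antipode_eq_algebraMap_counit (f i),
      Algebra.algebraMap_eq_smul_one, TensorProduct.tmul_smul]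
  rw [rhs_eq]
  rw [show ∑ i ∈ c.index, Coalgebra.counit (R := ℂ) (c.right i) • (c.left i ⊗ₜ[ℂ] (1 : H))
      = (∑ i ∈ c.index, Coalgebra.counit (R := ℂ) (c.right i) • c.left i) ⊗ₜ[ℂ] (1 : H) by
    rw [TensorProduct.sum_tmul]
    exact Finset.sum_congr rfl fun i _ => by rw [TensorProduct.smul_tmul']]
  rw [sum_smul_counit_eq c]

lemma comul_antipode' :
    (Coalgebra.comul (R := ℂ) (A := H)) ∘ₗ HopfAlgebra.antipode (R := ℂ)
      = (TensorProduct.comm ℂ H H).toLinearMap ∘ₗ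
        TensorProduct.map (HopfAlgebra.antipode (R := ℂ)) (HopfAlgebra.antipode (R := ℂ)) ∘ₗ
        Coalgebra.comul := by
  apply conv_unique _ (Coalgebra.comul (R := ℂ) (A := H)) _ _ _
  · -- conv (Δ ∘ S) Δ = convOne
    have hψ : LinearMap.mul' ℂ (H ⊗[ℂ] H) ∘ₗ
        TensorProduct.map (Coalgebra.comul (R := ℂ) (A := H)) (Coalgebra.comul (R := ℂ) (A := H))
        = Coalgebra.comul (R := ℂ) (A := H) ∘ₗ LinearMap.mul' ℂ H := by
      apply TensorProduct.ext'
      intro a b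
      simp [Bialgebra.comul_mul]
    have : conv ((Coalgebra.comul (R := ℂ) (A := H)) ∘ₗ HopfAlgebra.antipode (R := ℂ))
          ((Coalgebra.comul (R := ℂ) (A := H)) ∘ₗ LinearMap.id)
        = (Coalgebra.comul (R := ℂ) (A := H)) ∘ₗ
            conv (HopfAlgebra.antipode (R := ℂ)) LinearMap.id :=
      conv_algMor_comp _ hψ _ _
    rw [conv_antipode_id] at this
    simp only [LinearMap.comp_id] at this
    rw [this]
    unfold _root_.convOne
    apply LinearMap.ext
    intro a
    simp only [LinearMap.comp_apply, Algebra.linearMap_apply,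
      Algebra.algebraMap_eq_smul_one, map_smul, Bialgebra.comul_one]
  · -- conv Δ (comm ∘ (S ⊗ S) ∘ Δ) = convOne
    apply LinearMap.ext
    intro h
    set c := ℛ ℂ h
    set e : (i : c.ι) → Coalgebra.Repr ℂ (c.left i) (H × H) := fun i => ℛ ℂ (c.left i)
    set f : (i : c.ι) → Coalgebra.Repr ℂ (c.right i) (H × H) := fun i => ℛ ℂ (c.right i)
    have expand : conv (Coalgebra.comul (R := ℂ) (A := H))
        ((TensorProduct.comm ℂ H H).toLinearMap ∘ₗ
          TensorProduct.map (HopfAlgebra.antipode (R := ℂ)) (HopfAlgebra.antipode (R := ℂ)) ∘ₗ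
          Coalgebra.comul) h
        = ∑ i ∈ c.index, ∑ j ∈ (f i).index,
            Coalgebra.comul (R := ℂ) (c.left i) *
              (HopfAlgebra.antipode (R := ℂ) ((f i).right j) ⊗ₜ[ℂ]
                HopfAlgebra.antipode (R := ℂ) ((f i).left j)) := by
      rw [conv_apply_repr _ _ c]
      refine Finset.sum_congr rfl fun i _ => ?_
      rw [LinearMap.comp_apply, LinearMap.comp_apply, ← (f i).eq, map_sum, map_sum,
        Finset.mul_sum]
      exact Finset.sum_congr rfl fun j _ => by
        simp [TensorProduct.map_tmul, TensorProduct.comm_tmul]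
    -- regroup using coassociativity
    set θ : H ⊗[ℂ] (H ⊗[ℂ] H) →ₗ[ℂ] H ⊗[ℂ] H :=
      LinearMap.mul' ℂ (H ⊗[ℂ] H) ∘ₗ
        TensorProduct.map (Coalgebra.comul (R := ℂ) (A := H))
          ((TensorProduct.comm ℂ H H).toLinearMap ∘ₗ
            TensorProduct.map (HopfAlgebra.antipode (R := ℂ)) (HopfAlgebra.antipode (R := ℂ)))
    have key := congrArg θ (Coalgebra.sum_tmul_tmul_eq (R := ℂ) c e f)
    simp only [map_sum, θ, LinearMap.comp_apply, TensorProduct.map_tmul,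
      LinearMap.mul'_apply, LinearEquiv.coe_coe, TensorProduct.comm_tmul] at key
    rw [expand, ← key]
    have collapse : ∀ i ∈ c.index, ∑ j ∈ (e i).index,
        Coalgebra.comul (R := ℂ) ((e i).left j) *
          (HopfAlgebra.antipode (R := ℂ) (c.right i) ⊗ₜ[ℂ]
            HopfAlgebra.antipode (R := ℂ) ((e i).right j))
        = (c.left i * HopfAlgebra.antipode (R := ℂ) (c.right i)) ⊗ₜ[ℂ] (1 : H) := by
      intro i _
      have split : ∀ j ∈ (e i).index,
          Coalgebra.comul (R := ℂ) ((e i).left j) *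
            (HopfAlgebra.antipode (R := ℂ) (c.right i) ⊗ₜ[ℂ]
              HopfAlgebra.antipode (R := ℂ) ((e i).right j))
          = (Coalgebra.comul (R := ℂ) ((e i).left j) *
              ((1 : H) ⊗ₜ[ℂ] HopfAlgebra.antipode (R := ℂ) ((e i).right j))) *
            (HopfAlgebra.antipode (R := ℂ) (c.right i) ⊗ₜ[ℂ] (1 : H)) := by
        intro j _
        rw [mul_assoc, Algebra.TensorProduct.tmul_mul_tmul, one_mul, mul_one]
      rw [Finset.sum_congr rfl split, ← Finset.sum_mul, sum_comul_mul_one_antipode (e i),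
        Algebra.TensorProduct.tmul_mul_tmul, one_mul]
    rw [Finset.sum_congr rfl collapse, ← TensorProduct.sum_tmul,
      HopfAlgebra.sum_mul_antipode_eq_algebraMap_counit c]
    simp [_root_.convOne, Algebra.algebraMap_eq_smul_one, Algebra.TensorProduct.one_def,
      TensorProduct.smul_tmul']

lemma comul_antipode (a : H) :
    Coalgebra.comul (R := ℂ) (HopfAlgebra.antipode (R := ℂ) a)
      = (TensorProduct.comm ℂ H H)
          (TensorProduct.map (HopfAlgebra.antipode (R := ℂ)) (HopfAlgebra.antipode (R := ℂ))
            (Coalgebra.comul a)) :=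
  LinearMap.congr_fun (comul_antipode' (H := H)) a

end ComulAntipode

section Twisted
variable (δ : H →ₐ[ℂ] ℂ)

lemma twisted_apply {a : H} (c : Coalgebra.Repr ℂ a (H × H)) :
    twistedAntipode H δ a
      = ∑ i ∈ c.index, δ (c.left i) • HopfAlgebra.antipode (R := ℂ) (c.right i) := by
  simp only [twistedAntipode, LinearMap.comp_apply, ← c.eq, map_sum, TensorProduct.map_tmul,
    LinearEquiv.coe_coe, TensorProduct.lid_tmul, AlgHom.toLinearMap_apply]

lemma tau2_tmul (u v : H) :
    tau2 H δ (u ⊗ₜ[ℂ] v)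
      = Coalgebra.comul (R := ℂ) (twistedAntipode H δ u) * (v ⊗ₜ[ℂ] (1 : H)) := by
  simp only [tau2, LinearMap.comp_apply, TensorProduct.map_tmul, LinearMap.mul'_apply,
    LinearMap.flip_apply, TensorProduct.mk_apply]

lemma comul_twisted {a : H} (c : Coalgebra.Repr ℂ a (H × H)) :
    Coalgebra.comul (R := ℂ) (twistedAntipode H δ a)
      = ∑ i ∈ c.index,
          HopfAlgebra.antipode (R := ℂ) (c.right i) ⊗ₜ[ℂ] twistedAntipode H δ (c.left i) := by
  set e : (i : c.ι) → Coalgebra.Repr ℂ (c.left i) (H × H) := fun i => ℛ ℂ (c.left i) with he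
  set f : (i : c.ι) → Coalgebra.Repr ℂ (c.right i) (H × H) := fun i => ℛ ℂ (c.right i) with hf
  set θ₁ : H ⊗[ℂ] (H ⊗[ℂ] H) →ₗ[ℂ] H ⊗[ℂ] H :=
    (TensorProduct.lid ℂ (H ⊗[ℂ] H)).toLinearMap ∘ₗ
      TensorProduct.map δ.toLinearMap
        ((TensorProduct.comm ℂ H H).toLinearMap ∘ₗ
          TensorProduct.map (HopfAlgebra.antipode (R := ℂ)) (HopfAlgebra.antipode (R := ℂ)))
    with hθ₁
  have key := congrArg θ₁ (Coalgebra.sum_tmul_tmul_eq (R := ℂ) c e f)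
  simp only [map_sum, hθ₁, LinearMap.comp_apply, TensorProduct.map_tmul, LinearEquiv.coe_coe,
    TensorProduct.comm_tmul, TensorProduct.lid_tmul, AlgHom.toLinearMap_apply] at key
  have lhs_eq : Coalgebra.comul (R := ℂ) (twistedAntipode H δ a)
      = ∑ i ∈ c.index, ∑ j ∈ (f i).index,
          δ (c.left i) • (HopfAlgebra.antipode (R := ℂ) ((f i).right j) ⊗ₜ[ℂ]
            HopfAlgebra.antipode (R := ℂ) ((f i).left j)) := by
    rw [twisted_apply H δ c, map_sum]
    refine Finset.sum_congr rfl fun i _ => ?_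
    rw [map_smul, comul_antipode, ← (f i).eq, map_sum, map_sum]
    simp only [TensorProduct.map_tmul, TensorProduct.comm_tmul]
    rw [Finset.smul_sum]
  have rhs_eq : ∑ i ∈ c.index,
        HopfAlgebra.antipode (R := ℂ) (c.right i) ⊗ₜ[ℂ] twistedAntipode H δ (c.left i)
      = ∑ i ∈ c.index, ∑ j ∈ (e i).index,
          δ ((e i).left j) • (HopfAlgebra.antipode (R := ℂ) (c.right i) ⊗ₜ[ℂ]
            HopfAlgebra.antipode (R := ℂ) ((e i).right j)) := by
    refine Finset.sum_congr rfl fun i _ => ?_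
    rw [twisted_apply H δ (e i), TensorProduct.tmul_sum]
    exact Finset.sum_congr rfl fun j _ => by rw [TensorProduct.tmul_smul]
  rw [lhs_eq, rhs_eq, ← key]

lemma twisted_mul (x y : H) :
    twistedAntipode H δ (x * y) = twistedAntipode H δ y * twistedAntipode H δ x := by
  set rx := ℛ ℂ x
  set ry := ℛ ℂ y
  have hcm : (Coalgebra.comul (R := ℂ) (x * y) : H ⊗[ℂ] H)
      = ∑ i ∈ rx.index, ∑ j ∈ ry.index,
          (rx.left i * ry.left j) ⊗ₜ[ℂ] (rx.right i * ry.right j) := by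
    rw [Bialgebra.comul_mul, ← rx.eq, ← ry.eq, Finset.sum_mul_sum]
    exact Finset.sum_congr rfl fun i _ => Finset.sum_congr rfl fun j _ => by
      rw [Algebra.TensorProduct.tmul_mul_tmul]
  have lhs_eq : twistedAntipode H δ (x * y)
      = ∑ i ∈ rx.index, ∑ j ∈ ry.index,
          (δ (ry.left j) * δ (rx.left i)) •
            (HopfAlgebra.antipode (R := ℂ) (ry.right j) *
              HopfAlgebra.antipode (R := ℂ) (rx.right i)) := by
    simp only [twistedAntipode, LinearMap.comp_apply, hcm, map_sum, TensorProduct.map_tmul,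
      LinearEquiv.coe_coe, TensorProduct.lid_tmul, AlgHom.toLinearMap_apply]
    refine Finset.sum_congr rfl fun i _ => Finset.sum_congr rfl fun j _ => ?_
    rw [map_mul, _root_.antipode_mul, mul_comm]
  rw [lhs_eq, twisted_apply H δ rx, twisted_apply H δ ry, Finset.sum_mul_sum]
  rw [Finset.sum_comm]
  refine Finset.sum_congr rfl fun j _ => Finset.sum_congr rfl fun i _ => ?_
  rw [smul_mul_smul_comm]

lemma tau2_comul (a : H) :
    tau2 H δ (Coalgebra.comul (R := ℂ) a) = (1 : H) ⊗ₜ[ℂ] twistedAntipode H δ a := by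
  set c := ℛ ℂ a
  set e : (i : c.ι) → Coalgebra.Repr ℂ (c.left i) (H × H) := fun i => ℛ ℂ (c.left i) with he
  set f : (i : c.ι) → Coalgebra.Repr ℂ (c.right i) (H × H) := fun i => ℛ ℂ (c.right i) with hf
  set θ₂ : H ⊗[ℂ] (H ⊗[ℂ] H) →ₗ[ℂ] H ⊗[ℂ] H :=
    TensorProduct.map (LinearMap.mul' ℂ H ∘ₗ (HopfAlgebra.antipode (R := ℂ) (A := H)).rTensor H)
        (twistedAntipode H δ) ∘ₗ
      (TensorProduct.comm ℂ H (H ⊗[ℂ] H)).toLinearMap with hθ₂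
  have key := congrArg θ₂ (Coalgebra.sum_tmul_tmul_eq (R := ℂ) c e f)
  simp only [map_sum, hθ₂, LinearMap.comp_apply, LinearEquiv.coe_coe, TensorProduct.comm_tmul,
    TensorProduct.map_tmul, LinearMap.rTensor_tmul, LinearMap.mul'_apply] at key
  have lhs_eq : tau2 H δ (Coalgebra.comul (R := ℂ) a)
      = ∑ i ∈ c.index, ∑ j ∈ (e i).index,
          (HopfAlgebra.antipode (R := ℂ) ((e i).right j) * c.right i) ⊗ₜ[ℂ]
            twistedAntipode H δ ((e i).left j) := by
    rw [← c.eq, map_sum]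
    refine Finset.sum_congr rfl fun i _ => ?_
    rw [tau2_tmul, comul_twisted H δ (e i), Finset.sum_mul]
    exact Finset.sum_congr rfl fun j _ => by
      rw [Algebra.TensorProduct.tmul_mul_tmul, mul_one]
  rw [lhs_eq, key]
  have rhs_eq : ∑ i ∈ c.index, ∑ j ∈ (f i).index,
        (HopfAlgebra.antipode (R := ℂ) ((f i).left j) * (f i).right j) ⊗ₜ[ℂ]
          twistedAntipode H δ (c.left i)
      = ∑ i ∈ c.index, Coalgebra.counit (R := ℂ) (c.right i) •
          ((1 : H) ⊗ₜ[ℂ] twistedAntipode H δ (c.left i)) := by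
    refine Finset.sum_congr rfl fun i _ => ?_
    rw [← TensorProduct.sum_tmul, HopfAlgebra.sum_antipode_mul_eq_algebraMap_counit (f i),
      Algebra.algebraMap_eq_smul_one, TensorProduct.smul_tmul']
  rw [rhs_eq]
  have : ∑ i ∈ c.index, Coalgebra.counit (R := ℂ) (c.right i) •
        ((1 : H) ⊗ₜ[ℂ] twistedAntipode H δ (c.left i))
      = (1 : H) ⊗ₜ[ℂ] twistedAntipode H δ
          (∑ i ∈ c.index, Coalgebra.counit (R := ℂ) (c.right i) • c.left i) := by
    rw [map_sum, TensorProduct.tmul_sum]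
    exact Finset.sum_congr rfl fun i _ => by rw [map_smul, TensorProduct.tmul_smul]
  rw [this, sum_smul_counit_eq c]

end Twisted
end Aux

/-- Assume the `δ`-twisted antipode is an involution, `S̃² = id`.  Then the
square of the cyclic operator `τ₂` on `H ⊗ H` is given by
`τ₂²(h¹ ⊗ h²) = Δ(S̃(h²)) · (1 ⊗ h¹) = ∑ S(h²₍₂₎) ⊗ S̃(h²₍₁₎) h¹` for all `h¹, h² ∈ H`. -/
theorem tau2_sq (δ : H →ₐ[ℂ] ℂ)
    (hS : twistedAntipode H δ ∘ₗ twistedAntipode H δ = LinearMap.id) :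
    ∀ h₁ h₂ : H,
      tau2 H δ (tau2 H δ (h₁ ⊗ₜ[ℂ] h₂)) =
          Coalgebra.comul (R := ℂ) (twistedAntipode H δ h₂) * ((1 : H) ⊗ₜ[ℂ] h₁) ∧
      tau2 H δ (tau2 H δ (h₁ ⊗ₜ[ℂ] h₂)) =
          TensorProduct.map (HopfAlgebra.antipode (R := ℂ))
            (LinearMap.mulRight ℂ h₁ ∘ₗ twistedAntipode H δ)
            ((TensorProduct.comm ℂ H H) (Coalgebra.comul (R := ℂ) h₂)) := by
  intro h₁ h₂
  set c := Coalgebra.Repr.arbitrary ℂ h₁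
  have hSS : twistedAntipode H δ (twistedAntipode H δ h₁) = h₁ := by
    have := LinearMap.congr_fun hS h₁
    simpa using this
  have t1 : tau2 H δ (h₁ ⊗ₜ[ℂ] h₂)
      = ∑ i ∈ c.index, (HopfAlgebra.antipode (R := ℂ) (c.right i) * h₂) ⊗ₜ[ℂ]
          twistedAntipode H δ (c.left i) := by
    rw [tau2_tmul, comul_twisted H δ c, Finset.sum_mul]
    exact Finset.sum_congr rfl fun i _ => by
      rw [Algebra.TensorProduct.tmul_mul_tmul, mul_one]
  have bracket : ∑ i ∈ c.index,
        Coalgebra.comul (R := ℂ)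
            (twistedAntipode H δ (HopfAlgebra.antipode (R := ℂ) (c.right i))) *
          (twistedAntipode H δ (c.left i) ⊗ₜ[ℂ] (1 : H))
      = (1 : H) ⊗ₜ[ℂ] h₁ := by
    have : ∑ i ∈ c.index,
          Coalgebra.comul (R := ℂ)
              (twistedAntipode H δ (HopfAlgebra.antipode (R := ℂ) (c.right i))) *
            (twistedAntipode H δ (c.left i) ⊗ₜ[ℂ] (1 : H))
        = tau2 H δ (∑ i ∈ c.index,
            HopfAlgebra.antipode (R := ℂ) (c.right i) ⊗ₜ[ℂ] twistedAntipode H δ (c.left i)) := by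
      rw [map_sum]
      exact Finset.sum_congr rfl fun i _ => (tau2_tmul H δ _ _).symm
    rw [this, ← comul_twisted H δ c, tau2_comul, hSS]
  have main : tau2 H δ (tau2 H δ (h₁ ⊗ₜ[ℂ] h₂))
      = Coalgebra.comul (R := ℂ) (twistedAntipode H δ h₂) * ((1 : H) ⊗ₜ[ℂ] h₁) := by
    rw [t1, map_sum]
    have step : ∀ i ∈ c.index,
        tau2 H δ ((HopfAlgebra.antipode (R := ℂ) (c.right i) * h₂) ⊗ₜ[ℂ]
            twistedAntipode H δ (c.left i))
        = Coalgebra.comul (R := ℂ) (twistedAntipode H δ h₂) *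
            (Coalgebra.comul (R := ℂ)
                (twistedAntipode H δ (HopfAlgebra.antipode (R := ℂ) (c.right i))) *
              (twistedAntipode H δ (c.left i) ⊗ₜ[ℂ] (1 : H))) := by
      intro i _
      rw [tau2_tmul, twisted_mul, Bialgebra.comul_mul, mul_assoc]
    rw [Finset.sum_congr rfl step, ← Finset.mul_sum, bracket]
  refine ⟨main, ?_⟩
  rw [main]
  set d := Coalgebra.Repr.arbitrary ℂ h₂
  rw [comul_twisted H δ d, Finset.sum_mul, ← d.eq, map_sum, map_sum]
  refine Finset.sum_congr rfl fun i _ => ?_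
  rw [Algebra.TensorProduct.tmul_mul_tmul, mul_one, TensorProduct.comm_tmul,
    TensorProduct.map_tmul, LinearMap.comp_apply, LinearMap.mulRight_apply]


end
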